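/- arXiv:1606.04690 — 12 statements merged into one kernel-verified Lean document; each statement's English description precedes it below -/
import Mathlib

section
/- Let α ≥ 1 and β ≥ 1 be real numbers. Then for every z in the open unit disk 𝔻, the normalized Mittag-Leffler function satisfies |𝔼_{α,β}(z)| ≤ (β² + β + 1)/β². -/
/-!
Since `Γ(s + 1) = s Γ(s)`, we get `Γ(n + 1 + β) ≥ β (β + 1)ⁿ Γ(β)`, and `Γ` is increasing on
`[2, ∞)`, so for `α, β ≥ 1` the `n`-th coefficient `Γ(β)/Γ(α(n + 1) + β)` is at most
`β⁻¹ (β + 1)⁻ⁿ`. On the unit disk the series is therefore dominated by a geometric series with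
sum `(β + 1)/β²`, and adding `|z| < 1` gives the bound.
-/

/-- The normalized Mittag-Leffler function
`𝔼_{α,β}(z) = z + ∑_{n=1}^∞ (Γ(β)/Γ(αn+β)) z^{n+1}`. -/
noncomputable def normalizedMittagLeffler (α β : ℝ) (z : ℂ) : ℂ :=
  z + ∑' n : ℕ, ((Real.Gamma β / Real.Gamma (α * (n + 1) + β) : ℝ) : ℂ) * z ^ (n + 2)

open Real

lemma mul_pow_mul_Gamma_le_Gamma_nat_add_one_add {β : ℝ} (hβ : 0 < β) (n : ℕ) :
    β * (β + 1) ^ n * Gamma β ≤ Gamma (n + 1 + β) := by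
  induction n with
  | zero => simp [add_comm (1 : ℝ), Gamma_add_one hβ.ne']
  | succ n ih =>
    have hΓ : Gamma ((n + 1 : ℕ) + 1 + β) = (n + 1 + β) * Gamma (n + 1 + β) := by
      rw [← Gamma_add_one (by positivity)]; push_cast; ring_nf
    have hΓβ := Gamma_pos_of_pos hβ
    calc β * (β + 1) ^ (n + 1) * Gamma β = (β + 1) * (β * (β + 1) ^ n * Gamma β) := by ring
      _ ≤ (n + 1 + β) * Gamma (n + 1 + β) := by
        gcongr ?_ * ?_
        linarith [n.cast_nonneg (α := ℝ)]
      _ = Gamma ((n + 1 : ℕ) + 1 + β) := hΓ.symm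

lemma Gamma_div_Gamma_mul_add_le {α β : ℝ} (hα : 1 ≤ α) (hβ : 1 ≤ β) (n : ℕ) :
    Gamma β / Gamma (α * (n + 1) + β) ≤ β⁻¹ * (β + 1)⁻¹ ^ n := by
  have hβ0 : 0 < β := by linarith
  have hn : (n + 1 : ℝ) ≤ α * (n + 1) := le_mul_of_one_le_left (by positivity) hα
  have hmono : Gamma (n + 1 + β) ≤ Gamma (α * (n + 1) + β) :=
    Gamma_strictMonoOn_Ici.monotoneOn (Set.mem_Ici.2 (by linarith [n.cast_nonneg (α := ℝ)]))
      (Set.mem_Ici.2 (by linarith [n.cast_nonneg (α := ℝ)])) (by linarith)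
  have hlow := (mul_pow_mul_Gamma_le_Gamma_nat_add_one_add hβ0 n).trans hmono
  have hΓβ := Gamma_pos_of_pos hβ0
  rw [div_le_iff₀ (by positivity), inv_pow, ← mul_inv, inv_mul_eq_div, le_div_iff₀ (by positivity)]
  linarith

lemma hasSum_inv_mul_inv_add_one_pow {β : ℝ} (hβ : 0 < β) :
    HasSum (fun n : ℕ => β⁻¹ * (β + 1)⁻¹ ^ n) ((β + 1) / β ^ 2) := by
  have hr : (β + 1)⁻¹ < 1 := inv_lt_one_of_one_lt₀ (by linarith)
  have hsum : β⁻¹ * (1 - (β + 1)⁻¹)⁻¹ = (β + 1) / β ^ 2 := by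
    have : β + 1 ≠ 0 := by linarith
    field_simp
    rw [add_sub_cancel_right, div_self hβ.ne']
  simpa only [hsum] using (hasSum_geometric_of_lt_one (by positivity) hr).mul_left β⁻¹

theorem abs_normalizedMittagLeffler_le (α β : ℝ) (hα : 1 ≤ α) (hβ : 1 ≤ β)
    (z : ℂ) (hz : ‖z‖ < 1) :
    ‖normalizedMittagLeffler α β z‖ ≤ (β ^ 2 + β + 1) / β ^ 2 := by
  have hβ0 : 0 < β := by linarith
  have hterm (n : ℕ) : ‖((Gamma β / Gamma (α * (n + 1) + β) : ℝ) : ℂ) * z ^ (n + 2)‖ ≤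
      β⁻¹ * (β + 1)⁻¹ ^ n := by
    have hcoeff : 0 ≤ Gamma β / Gamma (α * (n + 1) + β) :=
      div_nonneg (Gamma_pos_of_pos hβ0).le
        (Gamma_nonneg_of_nonneg (by nlinarith [n.cast_nonneg (α := ℝ)]))
    rw [norm_mul, Complex.norm_real, norm_of_nonneg hcoeff, norm_pow]
    calc _ ≤ Gamma β / Gamma (α * (n + 1) + β) * 1 := by
          gcongr; exact pow_le_one₀ (norm_nonneg z) hz.le
      _ ≤ _ := (mul_one _).trans_le (Gamma_div_Gamma_mul_add_le hα hβ n)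
  calc ‖normalizedMittagLeffler α β z‖
      ≤ ‖z‖ + ‖∑' n : ℕ, ((Gamma β / Gamma (α * (n + 1) + β) : ℝ) : ℂ) * z ^ (n + 2)‖ :=
        norm_add_le _ _
    _ ≤ 1 + (β + 1) / β ^ 2 :=
        add_le_add hz.le (tsum_of_norm_bounded (hasSum_inv_mul_inv_add_one_pow hβ0) hterm)
    _ = (β ^ 2 + β + 1) / β ^ 2 := by field_simp; ring
end

section
/- Let α ≥ 1 and β ≥ 1 be real numbers. Then for every z in the open unit disk 𝔻, the derivative of the normalized Mittag-Leffler function satisfies |𝔼'_{α,β}(z)| ≤ (β² + 3β + 2)/β², where 𝔼'_{α,β}(z) = 1 + Σ_{n=1}^∞ (n+1) (Γ(β)/Γ(αn+β)) z^{n}. -/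
/-!
Each coefficient satisfies `Γ(β)/Γ(α(n+1)+β) ≤ 1/(β)ₙ₊₁`, since `Γ` is increasing on `[2, ∞)`
and `Γ(β+n+1) = (β)ₙ₊₁ Γ(β)`. From `(β)ₙ₊₂ ≥ β(β+1)(β+2)ⁿ` the terms with `n ≥ 1` are dominated
by the arithmetico-geometric series `∑ (n+3) xⁿ / (β(β+1))` with `x = 1/(β+2)`, whose sum
`(β+2)(3β+4)/(β(β+1)³)` is at most `(β+2)/β²`; the `n = 0` term contributes `2/β`.
-/

/-- The derivative of the normalized Mittag-Leffler function
`𝔼'_{α,β}(z) = 1 + ∑_{n=1}^∞ (n+1) (Γ(β)/Γ(αn+β)) z^{n}`. -/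
noncomputable def normalizedMittagLefflerDeriv (α β : ℝ) (z : ℂ) : ℂ :=
  1 + ∑' n : ℕ, ((n : ℂ) + 2) * ((Real.Gamma β / Real.Gamma (α * (n + 1) + β) : ℝ) : ℂ)
      * z ^ (n + 1)

namespace Real

theorem Gamma_add_nat_eq_ascPochhammer_eval_mul {s : ℝ} (hs : 0 < s) (n : ℕ) :
    Gamma (s + n) = (ascPochhammer ℝ n).eval s * Gamma s := by
  induction n with
  | zero => simp
  | succ n ih =>
    rw [Nat.cast_succ, ← add_assoc, Gamma_add_one (by positivity), ih, ascPochhammer_succ_eval]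
    ring

theorem Gamma_div_Gamma_le_inv_ascPochhammer_eval {s t : ℝ} {n : ℕ} (hs : 0 < s)
    (h2 : 2 ≤ s + n) (ht : s + n ≤ t) :
    Gamma s / Gamma t ≤ ((ascPochhammer ℝ n).eval s)⁻¹ := by
  have hΓ : Gamma (s + n) ≤ Gamma t := Gamma_strictMonoOn_Ici.monotoneOn h2 (h2.trans ht) ht
  calc Gamma s / Gamma t ≤ Gamma s / Gamma (s + n) :=
        div_le_div_of_nonneg_left (Gamma_pos_of_pos hs).le (Gamma_pos_of_pos (by positivity)) hΓ
    _ = ((ascPochhammer ℝ n).eval s)⁻¹ := by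
        rw [Gamma_add_nat_eq_ascPochhammer_eval_mul hs,
          div_mul_cancel_right₀ (Gamma_pos_of_pos hs).ne']

end Real

theorem mul_mul_pow_le_ascPochhammer_eval {s : ℝ} (hs : 0 ≤ s) (n : ℕ) :
    s * (s + 1) * (s + 2) ^ n ≤ (ascPochhammer ℝ (n + 2)).eval s := by
  induction n with
  | zero => simp [ascPochhammer_succ_eval]
  | succ n ih =>
    have h0 : 0 ≤ s * (s + 1) * (s + 2) ^ n := by positivity
    rw [ascPochhammer_succ_eval, pow_succ, ← mul_assoc]
    refine mul_le_mul ih ?_ (by positivity) (h0.trans ih)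
    push_cast
    linarith [(n.cast_nonneg : (0 : ℝ) ≤ n)]

theorem hasSum_coe_add_mul_geometric {𝕜 : Type*} [NormedDivisionRing 𝕜] [CompleteSpace 𝕜]
    {r : 𝕜} (hr : ‖r‖ < 1) (c : 𝕜) :
    HasSum (fun n : ℕ => (n + c) * r ^ n) (r / (1 - r) ^ 2 + c * (1 - r)⁻¹) := by
  simpa only [add_mul] using (hasSum_coe_mul_geometric_of_norm_lt_one hr).add
    ((hasSum_geometric_of_norm_lt_one hr).mul_left c)

noncomputable def mittagLefflerDerivMajorant (β : ℝ) (n : ℕ) : ℝ :=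
  (n + 2) / (ascPochhammer ℝ (n + 1)).eval β

section Majorant

variable {β : ℝ}

theorem norm_mittagLefflerDeriv_term_le {α : ℝ} (hα : 1 ≤ α) (hβ : 1 ≤ β) {z : ℂ}
    (hz : ‖z‖ ≤ 1) (n : ℕ) :
    ‖((n : ℂ) + 2) * ((Real.Gamma β / Real.Gamma (α * (n + 1) + β) : ℝ) : ℂ) * z ^ (n + 1)‖
      ≤ mittagLefflerDerivMajorant β n := by
  have hn : (0 : ℝ) ≤ n := n.cast_nonneg
  have hratio : Real.Gamma β / Real.Gamma (α * (n + 1) + β)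
      ≤ ((ascPochhammer ℝ (n + 1)).eval β)⁻¹ :=
    Real.Gamma_div_Gamma_le_inv_ascPochhammer_eval (by positivity) (by push_cast; linarith)
      (by push_cast; nlinarith)
  rw [norm_mul, norm_mul, norm_pow, Complex.norm_real, Real.norm_of_nonneg (by positivity),
    show ((n : ℂ) + 2) = ((n + 2 : ℝ) : ℂ) by push_cast; rfl, Complex.norm_real,
    Real.norm_of_nonneg (by positivity), mittagLefflerDerivMajorant,
    div_eq_mul_inv ((n : ℝ) + 2)]
  calc _ ≤ (n + 2) * (Real.Gamma β / Real.Gamma (α * (n + 1) + β)) * 1 := by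
        gcongr; exact pow_le_one₀ (norm_nonneg z) hz
    _ ≤ (n + 2) * ((ascPochhammer ℝ (n + 1)).eval β)⁻¹ := by
        rw [mul_one]; gcongr

theorem mittagLefflerDerivMajorant_succ_le (hβ : 0 < β) (n : ℕ) :
    mittagLefflerDerivMajorant β (n + 1) ≤ (n + 3) * (β + 2)⁻¹ ^ n / (β * (β + 1)) := by
  have hpos : 0 < β * (β + 1) * (β + 2) ^ n := by positivity
  calc mittagLefflerDerivMajorant β (n + 1) = (n + 3) / (ascPochhammer ℝ (n + 2)).eval β := by
        rw [mittagLefflerDerivMajorant]; push_cast; ring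
    _ ≤ (n + 3) / (β * (β + 1) * (β + 2) ^ n) := by
        gcongr; exact mul_mul_pow_le_ascPochhammer_eval hβ.le n
    _ = (n + 3) * (β + 2)⁻¹ ^ n / (β * (β + 1)) := by rw [inv_pow]; field_simp

theorem hasSum_coe_add_three_mul_inv_add_two_pow_div (hβ : 0 < β) :
    HasSum (fun n : ℕ => (n + 3) * (β + 2)⁻¹ ^ n / (β * (β + 1)))
      ((β + 2) * (3 * β + 4) / (β * (β + 1) ^ 3)) := by
  have hr : ‖(β + 2)⁻¹‖ < 1 := by
    rw [Real.norm_of_nonneg (by positivity)]; exact inv_lt_one_of_one_lt₀ (by linarith)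
  have hsum : (β + 2)⁻¹ / (1 - (β + 2)⁻¹) ^ 2 + 3 * (1 - (β + 2)⁻¹)⁻¹
      = (β + 2) * (3 * β + 4) / (β + 1) ^ 2 := by
    rw [show 1 - (β + 2)⁻¹ = (β + 1) / (β + 2) by field_simp; ring]
    field_simp
    ring
  have h := (hasSum_coe_add_mul_geometric hr 3).div_const (β * (β + 1))
  rw [hsum, div_div, show (β + 1) ^ 2 * (β * (β + 1)) = β * (β + 1) ^ 3 by ring] at h
  exact h

theorem summable_mittagLefflerDerivMajorant (hβ : 0 < β) :
    Summable (mittagLefflerDerivMajorant β) :=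
  (summable_nat_add_iff 1).mp <|
    (hasSum_coe_add_three_mul_inv_add_two_pow_div hβ).summable.of_nonneg_of_le
      (fun n => div_nonneg (by positivity) (ascPochhammer_pos _ _ hβ).le)
      (mittagLefflerDerivMajorant_succ_le hβ)

theorem tsum_mittagLefflerDerivMajorant_le (hβ : 0 < β) :
    ∑' n, mittagLefflerDerivMajorant β n ≤ (3 * β + 2) / β ^ 2 := by
  have htail : ∑' n, mittagLefflerDerivMajorant β (n + 1)
      ≤ (β + 2) * (3 * β + 4) / (β * (β + 1) ^ 3) :=
    hasSum_le (mittagLefflerDerivMajorant_succ_le hβ)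
      ((summable_nat_add_iff 1).mpr (summable_mittagLefflerDerivMajorant hβ)).hasSum
      (hasSum_coe_add_three_mul_inv_add_two_pow_div hβ)
  have hcompare : (β + 2) * (3 * β + 4) / (β * (β + 1) ^ 3) ≤ (β + 2) / β ^ 2 := by
    have hcubic : β * (3 * β + 4) ≤ (β + 1) ^ 3 := by
      nlinarith [mul_nonneg hβ.le (sq_nonneg (β - 1)), sq_nonneg (β - 1), sq_nonneg β]
    rw [div_le_div_iff₀ (by positivity) (by positivity)]
    nlinarith [mul_le_mul_of_nonneg_left hcubic (by positivity : 0 ≤ β * (β + 2))]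
  rw [(summable_mittagLefflerDerivMajorant hβ).tsum_eq_zero_add]
  calc mittagLefflerDerivMajorant β 0 + ∑' n, mittagLefflerDerivMajorant β (n + 1)
      ≤ 2 / β + (β + 2) / β ^ 2 := by
        gcongr
        · simp [mittagLefflerDerivMajorant]
        · exact htail.trans hcompare
    _ = (3 * β + 2) / β ^ 2 := by field_simp; ring

end Majorant

theorem abs_normalizedMittagLefflerDeriv_le (α β : ℝ) (hα : 1 ≤ α) (hβ : 1 ≤ β)
    (z : ℂ) (hz : ‖z‖ < 1) :
    ‖normalizedMittagLefflerDeriv α β z‖ ≤ (β ^ 2 + 3 * β + 2) / β ^ 2 := by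
  have hβ0 : 0 < β := by linarith
  calc ‖normalizedMittagLefflerDeriv α β z‖
      ≤ 1 + ∑' n, mittagLefflerDerivMajorant β n := by
        refine (norm_add_le _ _).trans ?_
        rw [norm_one]
        gcongr
        exact tsum_of_norm_bounded (summable_mittagLefflerDerivMajorant hβ0).hasSum
          (norm_mittagLefflerDeriv_term_le hα hβ hz.le)
    _ ≤ 1 + (3 * β + 2) / β ^ 2 := by gcongr; exact tsum_mittagLefflerDerivMajorant_le hβ0
    _ = (β ^ 2 + 3 * β + 2) / β ^ 2 := by field_simp; ring
end

section
/- Let α ≥ 1 and β ≥ (1+√5)/2 be real numbers and let m be a nonnegative integer. Then for every z in the open unit disk 𝔻 with z ≠ 0, Re( (𝔼_{α,β})_m(z) / 𝔼_{α,β}(z) ) ≥ β²/(β² + β + 1). -/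
/-- The `m`-th partial sum `(𝔼_{α,β})_m(z) = z + ∑_{n=1}^m (Γ(β)/Γ(αn+β)) z^{n+1}`. -/
noncomputable def normalizedMittagLefflerPartial (α β : ℝ) (m : ℕ) (z : ℂ) : ℂ :=
  z + ∑ n ∈ Finset.Icc 1 m, ((Real.Gamma β / Real.Gamma (α * n + β) : ℝ) : ℂ) * z ^ (n + 1)

/-! The coefficients satisfy `Γ(β)/Γ(α(n+1)+β) ≤ β⁻¹ (β+1)⁻ⁿ`, since `Γ` increases on `[2, ∞)`
and `Γ(β+n+1) = β(β+1)⋯(β+n) Γ(β)`; so they sum to at most `(β+1)/β² = 1/c` with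
`c = β²/(β+1)`, and `c ≥ 1` exactly when `β` is at least the golden ratio. Split `𝔼 = s + t` into
the partial sum `s` and the tail `t`. As `|z^{n+2}| ≤ |z|² < |z|`, the two pieces of the
coefficient sum control `|s - z|` and `|t|`, which gives `c |t| < |s|`. Finally
`(1+c) |s+t|² (Re(s/(s+t)) - c/(1+c)) = Re((s - c t) conj(s+t)) ≥ (|s| - c|t|)(|s| + |t|) ≥ 0`. -/

open Finset ComplexConjugate

theorem Complex.le_re_div_add_of_mul_norm_lt {s t : ℂ} {c : ℝ} (hc : 1 ≤ c) (h : c * ‖t‖ < ‖s‖) :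
    c / (1 + c) ≤ (s / (s + t)).re := by
  have hst : s + t ≠ 0 := by
    intro h0
    rw [eq_neg_of_add_eq_zero_left h0, norm_neg] at h
    nlinarith [norm_nonneg t]
  have hN := normSq_pos.2 hst
  set u := s.re * t.re + s.im * t.im
  have hu : u ≤ ‖s‖ * ‖t‖ := by
    simpa [u, norm_mul] using re_le_norm (s * conj t)
  have hre : (s / (s + t)).re = (‖s‖ ^ 2 + u) / normSq (s + t) := by
    rw [div_re, ← add_div, Complex.sq_norm]
    simp only [normSq_apply, add_re, add_im, u]; ring
  have hnormSq : normSq (s + t) = ‖s‖ ^ 2 + 2 * u + ‖t‖ ^ 2 := by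
    simp only [Complex.sq_norm, normSq_apply, add_re, add_im, u]; ring
  rw [hre, div_le_div_iff₀ (by linarith) hN, hnormSq]
  nlinarith [norm_nonneg t, norm_nonneg s]

theorem le_re_partialSum_div_of_tsum_le {a : ℕ → ℝ} (ha0 : ∀ n, 0 ≤ a n) (ha : Summable a)
    {c : ℝ} (hc : 1 ≤ c) (hac : c * ∑' n, a n ≤ 1) {z : ℂ} (hz : ‖z‖ < 1) (hz0 : z ≠ 0)
    (m : ℕ) :
    c / (1 + c) ≤ ((z + ∑ n ∈ range m, (a n : ℂ) * z ^ (n + 2)) /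
      (z + ∑' n, (a n : ℂ) * z ^ (n + 2))).re := by
  set f : ℕ → ℂ := fun n ↦ (a n : ℂ) * z ^ (n + 2)
  have hf : ∀ n, ‖f n‖ ≤ a n * ‖z‖ ^ 2 := fun n ↦ by
    rw [norm_mul, Complex.norm_real, Real.norm_of_nonneg (ha0 n), norm_pow]
    exact mul_le_mul_of_nonneg_left (pow_le_pow_of_le_one (norm_nonneg z) hz.le (by omega)) (ha0 n)
  have hfs : Summable f := .of_norm_bounded (ha.mul_right _) hf
  have ha' : Summable fun n ↦ a (n + m) := (summable_nat_add_iff m).2 ha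
  have htail : ‖∑' n, f (n + m)‖ ≤ (∑' n, a (n + m)) * ‖z‖ ^ 2 := by
    rw [← tsum_mul_right]
    exact tsum_of_norm_bounded (ha'.mul_right _).hasSum fun n ↦ hf (n + m)
  have hhead : ‖∑ n ∈ range m, f n‖ ≤ (∑ n ∈ range m, a n) * ‖z‖ ^ 2 := by
    rw [sum_mul]
    exact norm_sum_le_of_le _ fun n _ ↦ hf n
  have hsplit : z + ∑' n, f n = (z + ∑ n ∈ range m, f n) + ∑' n, f (n + m) := by
    rw [← hfs.sum_add_tsum_nat_add m]; ring
  rw [hsplit]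
  refine Complex.le_re_div_add_of_mul_norm_lt hc ?_
  have hz_pos : 0 < ‖z‖ := norm_pos_iff.2 hz0
  have hhead0 : 0 ≤ ∑ n ∈ range m, a n := sum_nonneg fun n _ ↦ ha0 n
  have htail0 : 0 ≤ ∑' n, a (n + m) := tsum_nonneg fun n ↦ ha0 _
  have ha_split := ha.sum_add_tsum_nat_add m
  calc c * ‖∑' n, f (n + m)‖
      ≤ (c * ∑' n, a (n + m) + ∑ n ∈ range m, a n) * ‖z‖ ^ 2 - ‖∑ n ∈ range m, f n‖ := by
        nlinarith
    _ ≤ (c * ∑' n, a n) * ‖z‖ ^ 2 - ‖∑ n ∈ range m, f n‖ := by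
        rw [← ha_split]
        nlinarith [mul_nonneg (mul_nonneg (sub_nonneg.2 hc) hhead0) (sq_nonneg ‖z‖)]
    _ < ‖z‖ - ‖∑ n ∈ range m, f n‖ := by nlinarith
    _ ≤ ‖z + ∑ n ∈ range m, f n‖ := norm_sub_le_norm_add _ _

namespace Real

theorem mul_pow_mul_Gamma_le_Gamma_add {β : ℝ} (hβ : 0 < β) (n : ℕ) :
    β * (β + 1) ^ n * Gamma β ≤ Gamma (β + (n + 1)) := by
  induction n with
  | zero => simp [Gamma_add_one hβ.ne']
  | succ n ih =>
    have hpos : 0 < β + (n + 1) := by positivity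
    calc β * (β + 1) ^ (n + 1) * Gamma β = (β + 1) * (β * (β + 1) ^ n * Gamma β) := by ring
      _ ≤ (β + (n + 1)) * Gamma (β + (n + 1)) := by
        gcongr
        linarith [n.cast_nonneg (α := ℝ)]
      _ = Gamma (β + ((n + 1 : ℕ) + 1)) := by
        rw [← Gamma_add_one hpos.ne']; push_cast; ring_nf

theorem Gamma_div_Gamma_mul_add_le {α β : ℝ} (hα : 1 ≤ α) (hβ : 1 ≤ β) (n : ℕ) :
    Gamma β / Gamma (α * (n + 1) + β) ≤ β⁻¹ * (β + 1)⁻¹ ^ n := by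
  have hn := n.cast_nonneg (α := ℝ)
  have hmono : Gamma (β + (n + 1)) ≤ Gamma (α * (n + 1) + β) :=
    Gamma_strictMonoOn_Ici.monotoneOn (by simp only [Set.mem_Ici]; linarith)
      (by simp only [Set.mem_Ici]; nlinarith) (by nlinarith)
  have hprod := mul_pow_mul_Gamma_le_Gamma_add (by linarith : 0 < β) n
  rw [div_le_iff₀ (Gamma_pos_of_pos (by nlinarith)), inv_pow, ← mul_inv,
    le_inv_mul_iff₀ (by positivity)]
  linarith

theorem hasSum_inv_mul_inv_add_one_pow {β : ℝ} (hβ : 0 < β) :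
    HasSum (fun n : ℕ ↦ β⁻¹ * (β + 1)⁻¹ ^ n) ((β + 1) / β ^ 2) := by
  have hlim : β⁻¹ * (1 - (β + 1)⁻¹)⁻¹ = (β + 1) / β ^ 2 := by
    have : 1 - (β + 1)⁻¹ = β / (β + 1) := by field_simp; ring
    rw [this, inv_div]
    field_simp
  have hr : (β + 1)⁻¹ < 1 := inv_lt_one_of_one_lt₀ (by linarith)
  rw [← hlim]
  exact (hasSum_geometric_of_lt_one (by positivity) hr).mul_left _

theorem Gamma_div_Gamma_mul_add_nonneg {α β : ℝ} (hα : 0 ≤ α) (hβ : 0 < β) (n : ℕ) :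
    0 ≤ Gamma β / Gamma (α * (n + 1) + β) :=
  (div_pos (Gamma_pos_of_pos hβ) (Gamma_pos_of_pos (by positivity))).le

theorem summable_Gamma_div_Gamma_mul_add {α β : ℝ} (hα : 1 ≤ α) (hβ : 1 ≤ β) :
    Summable fun n : ℕ ↦ Gamma β / Gamma (α * (n + 1) + β) :=
  .of_nonneg_of_le (Gamma_div_Gamma_mul_add_nonneg (by linarith) (by linarith))
    (Gamma_div_Gamma_mul_add_le hα hβ) (hasSum_inv_mul_inv_add_one_pow (by linarith)).summable

theorem tsum_Gamma_div_Gamma_mul_add_le {α β : ℝ} (hα : 1 ≤ α) (hβ : 1 ≤ β) :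
    ∑' n : ℕ, Gamma β / Gamma (α * (n + 1) + β) ≤ (β + 1) / β ^ 2 :=
  hasSum_le (Gamma_div_Gamma_mul_add_le hα hβ) (summable_Gamma_div_Gamma_mul_add hα hβ).hasSum
    (hasSum_inv_mul_inv_add_one_pow (by linarith))

end Real

theorem normalizedMittagLefflerPartial_eq (α β : ℝ) (m : ℕ) (z : ℂ) :
    normalizedMittagLefflerPartial α β m z =
      z + ∑ n ∈ range m, ((Real.Gamma β / Real.Gamma (α * (n + 1) + β) : ℝ) : ℂ) * z ^ (n + 2) := by
  rw [normalizedMittagLefflerPartial, ← Ico_add_one_right_eq_Icc, sum_Ico_eq_sum_range,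
    Nat.add_sub_cancel]
  refine congrArg (z + ·) (sum_congr rfl fun n _ ↦ ?_)
  rw [add_comm 1 n, Nat.cast_succ]

open Real in
theorem re_partial_div_mittagLeffler_ge (α β : ℝ) (hα : 1 ≤ α)
    (hβ : (1 + Real.sqrt 5) / 2 ≤ β) (m : ℕ) (z : ℂ) (hz : ‖z‖ < 1) (hz0 : z ≠ 0) :
    β ^ 2 / (β ^ 2 + β + 1) ≤
      (normalizedMittagLefflerPartial α β m z / normalizedMittagLeffler α β z).re := by
  have hφ : goldenRatio ≤ β := hβ
  have hβ1 : 1 ≤ β := one_lt_goldenRatio.le.trans hφ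
  have hβ_sq : β + 1 ≤ β ^ 2 := by
    nlinarith [goldenRatio_sq, goldenRatio_pos, mul_nonneg (sub_nonneg.2 hφ) (sub_nonneg.2 hβ1)]
  set c := β ^ 2 / (β + 1) with hc_def
  have hc : 1 ≤ c := (one_le_div (by positivity)).2 hβ_sq
  have hsum : c * ∑' n : ℕ, Gamma β / Gamma (α * (n + 1) + β) ≤ 1 := calc
    _ ≤ c * ((β + 1) / β ^ 2) := by gcongr; exact tsum_Gamma_div_Gamma_mul_add_le hα hβ1
    _ = 1 := by rw [hc_def]; field_simp
  have hc_div : c / (1 + c) = β ^ 2 / (β ^ 2 + β + 1) := by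
    rw [hc_def]; field_simp; ring
  rw [← hc_div, normalizedMittagLefflerPartial_eq]
  exact le_re_partialSum_div_of_tsum_le (Gamma_div_Gamma_mul_add_nonneg (by linarith) (by linarith))
    (summable_Gamma_div_Gamma_mul_add hα hβ1) hc hsum hz hz0 m
end

section
/- Let α ≥ 1 and β ≥ (3+√17)/2 be real numbers and let m be a nonnegative integer. Then for every z in the open unit disk 𝔻, Re( 𝔼'_{α,β}(z) / (𝔼_{α,β})'_m(z) ) ≥ (β² − 3β − 2)/β², where 𝔼'_{α,β}(z) = 1 + Σ_{n=1}^∞ (n+1) A_n z^{n} and (𝔼_{α,β})'_m(z) = 1 + Σ_{n=1}^m (n+1) A_n z^{n}. -/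
/-- The derivative of the `m`-th partial sum,
`(𝔼_{α,β})'_m(z) = 1 + ∑_{n=1}^m (n+1) (Γ(β)/Γ(αn+β)) z^{n}`. -/
noncomputable def normalizedMittagLefflerDerivPartial (α β : ℝ) (m : ℕ) (z : ℂ) : ℂ :=
  1 + ∑ n ∈ Finset.Icc 1 m,
      ((n : ℂ) + 1) * ((Real.Gamma β / Real.Gamma (α * n + β) : ℝ) : ℂ) * z ^ n

/-!
Since `Γ(x + 1) = x Γ(x)` and `Γ` increases on `[2, ∞)`, the coefficients satisfy
`Γ(β) / Γ(α n + β) ≤ β⁻ⁿ`, so on the unit disk the terms of `𝔼'_{α,β} - 1` are dominated by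
`(n + 1) β⁻ⁿ`, whose sum is `S = (2β - 1) / (β - 1)²`. Split `𝔼' = G + D` into the partial sum
`G` and its tail `D`, and let `T` be the part of `S` dominating `G - 1`. Then `‖G‖ ≥ 1 - T` and
`‖D‖ ≤ S - T ≤ S (1 - T)` (as `S < 1`), so `Re (𝔼' / G) ≥ 1 - ‖D / G‖ ≥ 1 - S`, and `S ≤ (3β + 2) / β²`
once `β² ≥ 3β + 2`.
-/

open Finset Real

theorem pow_mul_Gamma_le_Gamma_nat_add {β : ℝ} (hβ : 0 < β) (n : ℕ) :
    β ^ n * Gamma β ≤ Gamma (n + β) := by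
  induction n with
  | zero => simp
  | succ n ih =>
    have hnβ : 0 < n + β := by positivity
    calc β ^ (n + 1) * Gamma β = β * (β ^ n * Gamma β) := by ring
      _ ≤ (n + β) * Gamma (n + β) := by
        gcongr
        linarith [n.cast_nonneg (α := ℝ)]
      _ = Gamma ((n + 1 : ℕ) + β) := by
        rw [← Gamma_add_one hnβ.ne']; push_cast; ring_nf

theorem Gamma_div_Gamma_mul_nat_add_le {α β : ℝ} (hα : 1 ≤ α) (hβ : 2 ≤ β) (n : ℕ) :
    Gamma β / Gamma (α * n + β) ≤ β⁻¹ ^ n := by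
  have hn : (n : ℝ) + β ≤ α * n + β := by nlinarith [n.cast_nonneg (α := ℝ)]
  have hβ0 : 0 < β := by linarith
  have hmono : Gamma (n + β) ≤ Gamma (α * n + β) :=
    Gamma_strictMonoOn_Ici.monotoneOn (by simp; linarith [n.cast_nonneg (α := ℝ)])
      (by simp; linarith) hn
  rw [div_le_iff₀ (Gamma_pos_of_pos (by linarith)), inv_pow, ← div_eq_inv_mul,
    le_div_iff₀ (pow_pos hβ0 n), mul_comm]
  exact (pow_mul_Gamma_le_Gamma_nat_add hβ0 n).trans hmono

theorem hasSum_nat_add_two_mul_pow_succ {x : ℝ} (hx : |x| < 1) :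
    HasSum (fun n : ℕ ↦ ((n : ℝ) + 2) * x ^ (n + 1)) (x * (2 - x) / (1 - x) ^ 2) := by
  have h1x : 1 - x ≠ 0 := by linarith [le_abs_self x]
  have hsum : HasSum (fun n : ℕ ↦ ((n : ℝ) + 1) * x ^ n) (1 / (1 - x) ^ 2) := by
    have h := (hasSum_coe_mul_geometric_of_norm_lt_one hx).add (hasSum_geometric_of_abs_lt_one hx)
    rw [show x / (1 - x) ^ 2 + (1 - x)⁻¹ = 1 / (1 - x) ^ 2 by field_simp; ring] at h
    exact h.congr_fun fun n ↦ by ring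
  have h := (hasSum_nat_add_iff' 1).mpr hsum
  rw [show 1 / (1 - x) ^ 2 - ∑ i ∈ range 1, ((i : ℝ) + 1) * x ^ i = x * (2 - x) / (1 - x) ^ 2 by
    rw [sum_range_one, Nat.cast_zero, zero_add, pow_zero, one_mul]; field_simp; ring] at h
  exact h.congr_fun fun n ↦ by push_cast; ring

theorem one_sub_le_re_one_add_add_div {P D : ℂ} {s t : ℝ} (hP : ‖P‖ ≤ t) (hD : ‖D‖ ≤ s - t)
    (ht : t < 1) (hs : s ≤ 1) : 1 - s ≤ ((1 + P + D) / (1 + P)).re := by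
  have hG : 1 - t ≤ ‖1 + P‖ := by
    have := norm_sub_norm_le (1 : ℂ) (-P)
    rw [norm_one, norm_neg, sub_neg_eq_add] at this
    linarith
  have hG0 : 1 + P ≠ 0 := norm_pos_iff.mp (by linarith)
  have hDG : ‖D / (1 + P)‖ ≤ s := by
    rw [norm_div, div_le_iff₀ (by linarith)]
    nlinarith [norm_nonneg P, norm_nonneg D]
  calc 1 - s ≤ 1 + (D / (1 + P)).re := by
        linarith [neg_abs_le (D / (1 + P)).re, Complex.abs_re_le_norm (D / (1 + P))]
    _ = ((1 + P + D) / (1 + P)).re := by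
        rw [add_div, div_self hG0, Complex.add_re, Complex.one_re]

theorem one_sub_tsum_le_re_div_partial_sum {c : ℕ → ℂ} {r : ℕ → ℝ} (hc : ∀ n, ‖c n‖ ≤ r n)
    (hr : Summable r) (hr1 : ∑' n, r n < 1) (m : ℕ) :
    1 - ∑' n, r n ≤ ((1 + ∑' n, c n) / (1 + ∑ n ∈ range m, c n)).re := by
  have hcs : Summable (‖c ·‖) := hr.of_nonneg_of_le (fun n ↦ norm_nonneg _) hc
  have hP : ‖∑ n ∈ range m, c n‖ ≤ ∑ n ∈ range m, r n :=
    (norm_sum_le _ _).trans (sum_le_sum fun n _ ↦ hc n)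
  have hcs' : Summable fun i ↦ ‖c (i + m)‖ := (summable_nat_add_iff m).2 hcs
  have hD : ‖∑' i, c (i + m)‖ ≤ ∑' n, r n - ∑ n ∈ range m, r n := by
    rw [← hr.sum_add_tsum_nat_add m, add_sub_cancel_left]
    exact (norm_tsum_le_tsum_norm hcs').trans
      (hcs'.tsum_le_tsum (fun i ↦ hc _) ((summable_nat_add_iff m).2 hr))
  have hT : ∑ n ∈ range m, r n < 1 :=
    (hr.sum_le_tsum _ fun n _ ↦ (norm_nonneg _).trans (hc n)).trans_lt hr1
  rw [← hcs.of_norm.sum_add_tsum_nat_add m, ← add_assoc]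
  exact one_sub_le_re_one_add_add_div hP hD hT hr1.le

/-- The `n`-th term `(n + 2) A_{n+1} z^{n+1}` of `𝔼'_{α,β}(z) - 1`. -/
noncomputable def mittagLefflerDerivTerm (α β : ℝ) (z : ℂ) (n : ℕ) : ℂ :=
  ((n : ℂ) + 2) * ((Gamma β / Gamma (α * (n + 1) + β) : ℝ) : ℂ) * z ^ (n + 1)

theorem normalizedMittagLefflerDeriv_eq_tsum (α β : ℝ) (z : ℂ) :
    normalizedMittagLefflerDeriv α β z = 1 + ∑' n, mittagLefflerDerivTerm α β z n :=
  rfl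

theorem normalizedMittagLefflerDerivPartial_eq_sum_range (α β : ℝ) (m : ℕ) (z : ℂ) :
    normalizedMittagLefflerDerivPartial α β m z =
      1 + ∑ n ∈ range m, mittagLefflerDerivTerm α β z n := by
  rw [normalizedMittagLefflerDerivPartial, ← Ico_add_one_right_eq_Icc, ← sum_Ico_add' _ 0 m 1,
    ← range_eq_Ico]
  congr 1
  refine sum_congr rfl fun n _ ↦ ?_
  rw [mittagLefflerDerivTerm]
  push_cast
  ring_nf

theorem norm_mittagLefflerDerivTerm_le {α β : ℝ} (hα : 1 ≤ α) (hβ : 2 ≤ β) {z : ℂ} (hz : ‖z‖ ≤ 1)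
    (n : ℕ) : ‖mittagLefflerDerivTerm α β z n‖ ≤ (n + 2) * β⁻¹ ^ (n + 1) := by
  have hA := Gamma_div_Gamma_mul_nat_add_le hα hβ (n + 1)
  have hA0 : 0 ≤ Gamma β / Gamma (α * (n + 1) + β) :=
    div_nonneg (Gamma_pos_of_pos (by linarith)).le
      (Gamma_pos_of_pos (by nlinarith [n.cast_nonneg (α := ℝ)])).le
  push_cast at hA
  rw [mittagLefflerDerivTerm, norm_mul, norm_mul, Complex.norm_real, Real.norm_of_nonneg hA0,
    norm_pow, show (n : ℂ) + 2 = ((n + 2 : ℕ) : ℂ) by push_cast; ring, Complex.norm_natCast]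
  push_cast
  calc ((n : ℝ) + 2) * (Gamma β / Gamma (α * (n + 1) + β)) * ‖z‖ ^ (n + 1)
      ≤ ((n : ℝ) + 2) * β⁻¹ ^ (n + 1) * 1 := by gcongr; exact pow_le_one₀ (norm_nonneg z) hz
    _ = (n + 2) * β⁻¹ ^ (n + 1) := mul_one _

theorem re_derivMittagLeffler_div_derivPartial_ge (α β : ℝ) (hα : 1 ≤ α)
    (hβ : (3 + Real.sqrt 17) / 2 ≤ β) (m : ℕ) (z : ℂ) (hz : ‖z‖ < 1) :
    (β ^ 2 - 3 * β - 2) / β ^ 2 ≤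
      (normalizedMittagLefflerDeriv α β z / normalizedMittagLefflerDerivPartial α β m z).re := by
  have h17 : √17 ^ 2 = 17 := sq_sqrt (by norm_num)
  have hβ72 : 7 / 2 ≤ β := by nlinarith [sqrt_nonneg 17]
  have hβsq : 3 * β + 2 ≤ β ^ 2 := by nlinarith [sqrt_nonneg 17]
  have hsum := hasSum_nat_add_two_mul_pow_succ (x := β⁻¹)
    (by rw [abs_of_pos (by positivity)]; exact inv_lt_one_of_one_lt₀ (by linarith))
  rw [show β⁻¹ * (2 - β⁻¹) / (1 - β⁻¹) ^ 2 = (2 * β - 1) / (β - 1) ^ 2 by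
    have : β - 1 ≠ 0 := by linarith
    field_simp] at hsum
  have hS1 : (2 * β - 1) / (β - 1) ^ 2 < 1 := by
    rw [div_lt_one (by nlinarith)]
    nlinarith
  have key := one_sub_tsum_le_re_div_partial_sum
    (norm_mittagLefflerDerivTerm_le hα (by linarith) hz.le) hsum.summable (hsum.tsum_eq ▸ hS1) m
  rw [hsum.tsum_eq, ← normalizedMittagLefflerDeriv_eq_tsum,
    ← normalizedMittagLefflerDerivPartial_eq_sum_range] at key
  refine le_trans ?_ key
  rw [div_le_iff₀ (by positivity), sub_mul, div_mul_eq_mul_div, le_sub_iff_add_le,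
    ← le_sub_iff_add_le', div_le_iff₀ (by nlinarith)]
  nlinarith [mul_nonneg (by linarith : (0 : ℝ) ≤ β) (sub_nonneg.2 hβsq)]
end

section
/- Let α ≥ 1 and β ≥ (3+√17)/2 be real numbers and let m be a nonnegative integer. Then for every z in the open unit disk 𝔻, Re( (𝔼_{α,β})'_m(z) / 𝔼'_{α,β}(z) ) ≥ β²/(β² + 3β + 2), where 𝔼'_{α,β}(z) = 1 + Σ_{n=1}^∞ (n+1) A_n z^{n} and (𝔼_{α,β})'_m(z) = 1 + Σ_{n=1}^m (n+1) A_n z^{n}. -/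
/-! Put `aₙ = (n + 2) Γ(β) / Γ(α(n + 1) + β)`, so that `𝔼'_{α,β}(z) = 1 + ∑ aₙ zⁿ⁺¹`.
Since `Γ(α(n + 1) + β) ≥ Γ(β + 1 + n) ≥ β (β + 1)ⁿ Γ(β)`, the coefficients are dominated by an
arithmetico-geometric series, and `∑ aₙ ≤ (β + 1)(2β + 1)/β³ ≤ S := (3β + 2)/β²`; the hypothesis
on `β` says exactly that `S ≤ 1`. Split `𝔼'_{α,β}(z) = Q + T` into the partial sum and the tail and
put `u = T / Q`: then `‖u‖ ≤ ‖z‖ S < 1`, and for `‖u‖ < 1`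
`Re (1 / (1 + u)) - 1 / (1 + ‖u‖) = (‖u‖ - Re u)(1 - ‖u‖) / ((1 + ‖u‖) ‖1 + u‖²) ≥ 0`,
so `Re (Q / (Q + T)) ≥ 1 / (1 + S) = β² / (β² + 3β + 2)`. -/

namespace Complex

theorem one_div_one_add_norm_le_re_inv_one_add {u : ℂ} (hu : ‖u‖ < 1) :
    1 / (1 + ‖u‖) ≤ (1 + u)⁻¹.re := by
  have hre : u.re ≤ ‖u‖ := re_le_norm u
  have hsq : ‖u‖ ^ 2 = u.re ^ 2 + u.im ^ 2 := by rw [Complex.sq_norm, normSq_apply]; ring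
  have hpos : 0 < normSq (1 + u) := by
    rw [normSq_apply, add_re, add_im, one_re, one_im]
    nlinarith [neg_abs_le u.re, abs_re_le_norm u]
  rw [inv_re, add_re, one_re, div_le_div_iff₀ (by positivity) hpos, one_mul, normSq_apply,
    add_re, add_im, one_re, one_im]
  -- `(1 + re u)(1 + ‖u‖) - ‖1 + u‖² = (‖u‖ - re u)(1 - ‖u‖)`
  nlinarith [mul_nonneg (sub_nonneg.2 hre) (sub_nonneg.2 hu.le)]

theorem one_div_one_add_le_re_div {P T : ℂ} {S : ℝ} (hS : ‖P‖ + ‖T‖ ≤ S) (hS1 : S < 1) :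
    1 / (1 + S) ≤ ((1 + P) / (1 + P + T)).re := by
  have hP : ‖P‖ < 1 := by linarith [norm_nonneg T]
  have hQ : 1 - ‖P‖ ≤ ‖1 + P‖ := by
    simpa using norm_sub_norm_le (1 : ℂ) (-P)
  have hQ0 : 1 + P ≠ 0 := norm_pos_iff.1 (by linarith)
  have hu : ‖T / (1 + P)‖ ≤ S := by
    rw [norm_div, div_le_iff₀ (by linarith)]
    nlinarith [norm_nonneg P, norm_nonneg T]
  have heq : (1 + P) / (1 + P + T) = (1 + T / (1 + P))⁻¹ := by
    field_simp
  calc 1 / (1 + S) ≤ 1 / (1 + ‖T / (1 + P)‖) := by gcongr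
    _ ≤ _ := heq ▸ one_div_one_add_norm_le_re_inv_one_add (hu.trans_lt hS1)

theorem one_div_one_add_le_re_partialSum_div_tsum {t : ℕ → ℂ} {b : ℕ → ℝ} {S : ℝ}
    (hb : Summable b) (htb : ∀ n, ‖t n‖ ≤ b n) (hS : ∑' n, b n ≤ S) (hS1 : S < 1) (m : ℕ) :
    1 / (1 + S) ≤ ((1 + ∑ n ∈ Finset.range m, t n) / (1 + ∑' n, t n)).re := by
  have hP : ‖∑ n ∈ Finset.range m, t n‖ ≤ ∑ n ∈ Finset.range m, b n :=
    norm_sum_le_of_le _ fun n _ ↦ htb n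
  have hT : ‖∑' n, t (n + m)‖ ≤ ∑' n, b (n + m) :=
    tsum_of_norm_bounded ((summable_nat_add_iff m).2 hb).hasSum fun n ↦ htb (n + m)
  rw [← (Summable.of_norm_bounded hb htb).sum_add_tsum_nat_add m, ← add_assoc]
  refine one_div_one_add_le_re_div ?_ hS1
  linarith [hb.sum_add_tsum_nat_add m]

end Complex

namespace Real

theorem pow_mul_Gamma_le_Gamma_add_nat {y : ℝ} (hy : 0 < y) (n : ℕ) :
    y ^ n * Gamma y ≤ Gamma (y + n) := by
  induction n with
  | zero => simp
  | succ n ih =>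
    have hΓ : 0 ≤ Gamma (y + n) := (Gamma_pos_of_pos (by positivity)).le
    calc y ^ (n + 1) * Gamma y = y * (y ^ n * Gamma y) := by ring
      _ ≤ (y + n) * Gamma (y + n) := by
        gcongr
        linarith
      _ = Gamma (y + ↑(n + 1)) := by
        rw [Nat.cast_succ, ← add_assoc, Gamma_add_one (by positivity)]

theorem hasSum_add_two_mul_inv_add_one_pow_div {β : ℝ} (hβ : 0 < β) :
    HasSum (fun n : ℕ ↦ (n + 2) * (β + 1)⁻¹ ^ n / β) ((β + 1) * (2 * β + 1) / β ^ 3) := by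
  have hy : ‖(β + 1)⁻¹‖ < 1 := by
    rw [norm_inv, Real.norm_of_nonneg (by positivity)]
    exact inv_lt_one_of_one_lt₀ (by linarith)
  have hy1 : 1 - (β + 1)⁻¹ = β / (β + 1) := by field_simp; ring
  have hsum := ((hasSum_coe_mul_geometric_of_norm_lt_one hy).add
    ((hasSum_geometric_of_norm_lt_one hy).mul_left 2)).div_const β
  rw [hy1] at hsum
  have hf : (fun n : ℕ ↦ (n + 2) * (β + 1)⁻¹ ^ n / β) =
      fun n : ℕ ↦ (n * (β + 1)⁻¹ ^ n + 2 * (β + 1)⁻¹ ^ n) / β :=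
    funext fun n ↦ by ring
  have hval : (β + 1) * (2 * β + 1) / β ^ 3 =
      ((β + 1)⁻¹ / (β / (β + 1)) ^ 2 + 2 * (β / (β + 1))⁻¹) / β := by
    field_simp
    ring
  rw [hf, hval]
  exact hsum

end Real

noncomputable def normalizedMittagLefflerDerivCoeff (α β : ℝ) (n : ℕ) : ℝ :=
  (n + 2) * (Real.Gamma β / Real.Gamma (α * (n + 1) + β))

section MittagLeffler

open Real

variable {α β : ℝ}

theorem normalizedMittagLefflerDerivCoeff_nonneg (hα : 0 ≤ α) (hβ : 0 < β) (n : ℕ) :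
    0 ≤ normalizedMittagLefflerDerivCoeff α β n := by
  have : 0 < Gamma (α * (n + 1) + β) := Gamma_pos_of_pos (by positivity)
  have : 0 < Gamma β := Gamma_pos_of_pos hβ
  unfold normalizedMittagLefflerDerivCoeff
  positivity

theorem normalizedMittagLefflerDerivCoeff_le (hα : 1 ≤ α) (hβ : 1 ≤ β) (n : ℕ) :
    normalizedMittagLefflerDerivCoeff α β n ≤ (n + 2) * (β + 1)⁻¹ ^ n / β := by
  have hβ0 : 0 < β := by linarith
  have hn : (0 : ℝ) ≤ n := n.cast_nonneg
  have hmono : Gamma (β + 1 + n) ≤ Gamma (α * (n + 1) + β) :=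
    Gamma_strictMonoOn_Ici.monotoneOn (by simp only [Set.mem_Ici]; linarith)
      (by simp only [Set.mem_Ici]; nlinarith) (by nlinarith)
  have hprod := pow_mul_Gamma_le_Gamma_add_nat (by linarith : 0 < β + 1) n
  rw [Gamma_add_one hβ0.ne'] at hprod
  have hΓ : 0 < Gamma β := Gamma_pos_of_pos hβ0
  calc normalizedMittagLefflerDerivCoeff α β n
      ≤ (n + 2) * (Gamma β / ((β + 1) ^ n * (β * Gamma β))) := by
        unfold normalizedMittagLefflerDerivCoeff
        gcongr
        exact hprod.trans hmono
    _ = (n + 2) * (β + 1)⁻¹ ^ n / β := by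
        rw [inv_pow]
        field_simp

theorem summable_normalizedMittagLefflerDerivCoeff (hα : 1 ≤ α) (hβ : 1 ≤ β) :
    Summable (normalizedMittagLefflerDerivCoeff α β) :=
  (hasSum_add_two_mul_inv_add_one_pow_div (by linarith)).summable.of_nonneg_of_le
    (normalizedMittagLefflerDerivCoeff_nonneg (by linarith) (by linarith))
    (normalizedMittagLefflerDerivCoeff_le hα hβ)

theorem tsum_normalizedMittagLefflerDerivCoeff_le (hα : 1 ≤ α) (hβ : 1 ≤ β) :
    ∑' n, normalizedMittagLefflerDerivCoeff α β n ≤ (β + 1) * (2 * β + 1) / β ^ 3 :=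
  hasSum_le (normalizedMittagLefflerDerivCoeff_le hα hβ)
    (summable_normalizedMittagLefflerDerivCoeff hα hβ).hasSum
    (hasSum_add_two_mul_inv_add_one_pow_div (by linarith))

theorem normalizedMittagLefflerDeriv_eq (z : ℂ) :
    normalizedMittagLefflerDeriv α β z =
      1 + ∑' n, (normalizedMittagLefflerDerivCoeff α β n : ℂ) * z ^ (n + 1) := by
  simp [normalizedMittagLefflerDeriv, normalizedMittagLefflerDerivCoeff]

theorem normalizedMittagLefflerDerivPartial_eq (m : ℕ) (z : ℂ) :
    normalizedMittagLefflerDerivPartial α β m z =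
      1 + ∑ n ∈ Finset.range m, (normalizedMittagLefflerDerivCoeff α β n : ℂ) * z ^ (n + 1) := by
  rw [normalizedMittagLefflerDerivPartial, ← Finset.Ico_add_one_right_eq_Icc,
    Finset.sum_Ico_eq_sum_range, Nat.add_sub_cancel]
  refine congrArg (1 + ·) (Finset.sum_congr rfl fun n _ ↦ ?_)
  simp only [normalizedMittagLefflerDerivCoeff]
  push_cast
  ring_nf

end MittagLeffler

theorem re_derivPartial_div_derivMittagLeffler_ge (α β : ℝ) (hα : 1 ≤ α)
    (hβ : (3 + Real.sqrt 17) / 2 ≤ β) (m : ℕ) (z : ℂ) (hz : ‖z‖ < 1) :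
    β ^ 2 / (β ^ 2 + 3 * β + 2) ≤
      (normalizedMittagLefflerDerivPartial α β m z / normalizedMittagLefflerDeriv α β z).re := by
  have h17 : 4 ≤ √17 := Real.le_sqrt_of_sq_le (by norm_num)
  have hβ0 : 0 < β := by linarith
  have hquad : 3 * β + 2 ≤ β ^ 2 := by nlinarith [Real.sq_sqrt (show (0 : ℝ) ≤ 17 by norm_num)]
  set S := (3 * β + 2) / β ^ 2 with hS
  have hS1 : S ≤ 1 := div_le_one_of_le₀ hquad (by positivity)
  have hcoeff : ∑' n, normalizedMittagLefflerDerivCoeff α β n ≤ S :=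
    (tsum_normalizedMittagLefflerDerivCoeff_le hα (by linarith)).trans <| by
      rw [div_le_div_iff₀ (by positivity) (by positivity)]
      nlinarith
  have hterm (n : ℕ) : ‖(normalizedMittagLefflerDerivCoeff α β n : ℂ) * z ^ (n + 1)‖ ≤
      ‖z‖ * normalizedMittagLefflerDerivCoeff α β n := by
    have hc : 0 ≤ normalizedMittagLefflerDerivCoeff α β n :=
      normalizedMittagLefflerDerivCoeff_nonneg (by linarith) hβ0 n
    rw [norm_mul, Complex.norm_real, Real.norm_of_nonneg hc, norm_pow, mul_comm]
    gcongr
    exact pow_le_of_le_one (norm_nonneg z) hz.le n.succ_ne_zero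
  have hzS : ‖z‖ * S < 1 := (mul_le_of_le_one_right (norm_nonneg z) hS1).trans_lt hz
  rw [normalizedMittagLefflerDerivPartial_eq, normalizedMittagLefflerDeriv_eq]
  calc β ^ 2 / (β ^ 2 + 3 * β + 2) = 1 / (1 + S) := by rw [hS]; field_simp; ring
    _ ≤ 1 / (1 + ‖z‖ * S) := by gcongr; exact mul_le_of_le_one_left (by positivity) hz.le
    _ ≤ _ := Complex.one_div_one_add_le_re_partialSum_div_tsum
        ((summable_normalizedMittagLefflerDerivCoeff hα (by linarith)).mul_left ‖z‖) hterm
        (by rw [tsum_mul_left]; gcongr) hzS m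
end

section
/- For every z in the open unit disk 𝔻 with z ≠ 0, Re( sinh(√z) / √z ) ≥ 1/4, where √z denotes the principal square root of z. -/
/-!
With `w = z ^ (1 / 2)` we have `‖w‖ ≤ 1`, and the cubic Taylor remainder of `exp` at `±w` gives
`‖sinh w - w‖ ≤ 2/9 ‖w‖³`. Hence `sinh w / w` lies within `2/9` of `1`, so its real part is at
least `7/9 ≥ 1/4`.
-/

open Complex

lemma norm_sinh_sub_self_le {w : ℂ} (hw : ‖w‖ ≤ 1) :
    ‖sinh w - w‖ ≤ 2 / 9 * ‖w‖ ^ 3 := by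
  -- `exp_bound` with `n = 3` bounds each remainder by `‖w‖ ^ 3 * 4 / (3! * 3) = 2/9 * ‖w‖ ^ 3`.
  have hpos := exp_bound hw (by norm_num : 0 < 3)
  have hneg := exp_bound (by simpa using hw : ‖-w‖ ≤ 1) (by norm_num : 0 < 3)
  simp only [Finset.sum_range_succ, Finset.sum_range_zero, norm_neg] at hpos hneg
  norm_num [Nat.factorial] at hpos hneg
  have hsplit : sinh w - w =
      ((exp w - (1 + w + w ^ 2 / 2)) - (exp (-w) - (1 + -w + w ^ 2 / 2))) / 2 := by
    rw [sinh]; ring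
  rw [hsplit, norm_div, Complex.norm_ofNat, div_le_iff₀ two_pos]
  linarith [norm_sub_le (exp w - (1 + w + w ^ 2 / 2)) (exp (-w) - (1 + -w + w ^ 2 / 2))]

lemma norm_sinh_div_self_sub_one_le {w : ℂ} (hw : ‖w‖ ≤ 1) (hw0 : w ≠ 0) :
    ‖sinh w / w - 1‖ ≤ 2 / 9 * ‖w‖ ^ 2 := by
  have hw' : 0 < ‖w‖ := norm_pos_iff.mpr hw0
  calc ‖sinh w / w - 1‖ = ‖sinh w - w‖ / ‖w‖ := by
        rw [← norm_div, sub_div, div_self hw0]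
    _ ≤ 2 / 9 * ‖w‖ ^ 3 / ‖w‖ := by gcongr; exact norm_sinh_sub_self_le hw
    _ = 2 / 9 * ‖w‖ ^ 2 := by field_simp

lemma seven_ninths_le_re_sinh_div_self {w : ℂ} (hw : ‖w‖ ≤ 1) (hw0 : w ≠ 0) :
    7 / 9 ≤ (sinh w / w).re := by
  have hdist := (abs_re_le_norm (sinh w / w - 1)).trans (norm_sinh_div_self_sub_one_le hw hw0)
  have hsq : ‖w‖ ^ 2 ≤ 1 := pow_le_one₀ (norm_nonneg w) hw
  rw [sub_re, one_re] at hdist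
  linarith [neg_abs_le ((sinh w / w).re - 1)]

theorem re_sinh_sqrt_div_sqrt_ge (z : ℂ) (hz : ‖z‖ < 1) (hz0 : z ≠ 0) :
    (1 / 4 : ℝ) ≤ (Complex.sinh (z ^ (1 / 2 : ℂ)) / z ^ (1 / 2 : ℂ)).re := by
  have hsqrt0 : z ^ (1 / 2 : ℂ) ≠ 0 := by simp [cpow_eq_zero_iff, hz0]
  have hsqrt : ‖z ^ (1 / 2 : ℂ)‖ ≤ 1 := by
    rw [show (1 / 2 : ℂ) = ((1 / 2 : ℝ) : ℂ) by norm_num, norm_cpow_real]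
    exact Real.rpow_le_one (norm_nonneg z) hz.le (by norm_num)
  linarith [seven_ninths_le_re_sinh_div_self hsqrt hsqrt0]
end

section
/- For every z in the open unit disk 𝔻 with z ≠ 0, Re( √z / sinh(√z) ) ≥ 4/7, where √z denotes the principal square root of z. -/
/-! With `w = √z` we have `‖w‖ < 1`, and the cubic Taylor remainder of `exp` gives
`‖sinh w / w - 1‖ ≤ 2/9`. A complex `u` with `‖u - 1‖ ≤ r < 1` satisfies
`Re (u⁻¹) ≥ 1 / (1 + r)`, so `Re (w / sinh w) ≥ 9/11 > 4/7`. -/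

namespace Complex

theorem norm_sinh_sub_self_le {w : ℂ} (hw : ‖w‖ ≤ 1) :
    ‖sinh w - w‖ ≤ 2 / 9 * ‖w‖ ^ 3 := by
  set E : ℂ → ℂ := fun x ↦ exp x - ∑ m ∈ Finset.range 3, x ^ m / m.factorial
  have hE : ∀ x : ℂ, ‖x‖ ≤ 1 → ‖E x‖ ≤ 2 / 9 * ‖x‖ ^ 3 := fun x hx ↦
    (exp_bound hx (n := 3) (by norm_num)).trans_eq (by norm_num [Nat.factorial]; ring)
  have hsplit : sinh w - w = (E w - E (-w)) / 2 := by
    simp only [E, sinh, Finset.sum_range_succ, Finset.sum_range_zero, Nat.factorial]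
    push_cast
    ring
  have hw' : ‖-w‖ ≤ 1 := by rwa [norm_neg]
  calc ‖sinh w - w‖ ≤ (‖E w‖ + ‖E (-w)‖) / 2 := by
        rw [hsplit, norm_div, RCLike.norm_ofNat]
        gcongr
        exact norm_sub_le _ _
    _ ≤ 2 / 9 * ‖w‖ ^ 3 := by linarith [hE w hw, norm_neg w ▸ hE (-w) hw']

theorem norm_sinh_div_self_sub_one_le {w : ℂ} (hw0 : w ≠ 0) (hw : ‖w‖ ≤ 1) :
    ‖sinh w / w - 1‖ ≤ 2 / 9 * ‖w‖ ^ 2 := by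
  have hpos : 0 < ‖w‖ := norm_pos_iff.mpr hw0
  rw [div_sub_one hw0, norm_div, div_le_iff₀ hpos]
  calc ‖sinh w - w‖ ≤ 2 / 9 * ‖w‖ ^ 3 := norm_sinh_sub_self_le hw
    _ = 2 / 9 * ‖w‖ ^ 2 * ‖w‖ := by ring

theorem inv_one_add_le_re_inv {u : ℂ} {r : ℝ} (hr : r < 1) (hu : ‖u - 1‖ ≤ r) :
    (1 + r)⁻¹ ≤ (u⁻¹).re := by
  have hre : |u.re - 1| ≤ r := by simpa using (abs_re_le_norm (u - 1)).trans hu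
  have hre_pos : 0 < u.re := by linarith [neg_abs_le (u.re - 1)]
  have hnormSq : normSq (u - 1) = normSq u - 2 * u.re + 1 := by
    simp only [normSq_apply, sub_re, sub_im, one_re, one_im]; ring
  have hsq : normSq u - 2 * u.re + 1 ≤ r ^ 2 := by
    rw [← hnormSq, normSq_eq_norm_sq]; gcongr
  have hu0 : 0 < normSq u := normSq_pos.mpr (by rintro rfl; simp at hre_pos)
  -- `‖u‖² ≤ (1 + r) Re u` follows from `‖u - 1‖² ≤ r²` and `Re u ≤ 1 + r`.
  rw [inv_re, le_div_iff₀ hu0, inv_mul_le_iff₀ (by linarith [abs_nonneg (u.re - 1)])]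
  nlinarith [le_abs_self (u.re - 1)]

theorem nine_div_eleven_le_re_div_sinh {w : ℂ} (hw0 : w ≠ 0) (hw : ‖w‖ ≤ 1) :
    9 / 11 ≤ (w / sinh w).re := by
  have hbound : ‖sinh w / w - 1‖ ≤ 2 / 9 :=
    (norm_sinh_div_self_sub_one_le hw0 hw).trans
      (mul_le_of_le_one_right (by norm_num) (pow_le_one₀ (norm_nonneg w) hw))
  rw [← inv_div (sinh w) w]
  convert inv_one_add_le_re_inv (by norm_num) hbound using 1
  norm_num

end Complex

theorem re_sqrt_div_sinh_sqrt_ge (z : ℂ) (hz : ‖z‖ < 1) (hz0 : z ≠ 0) :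
    (4 / 7 : ℝ) ≤ (z ^ (1 / 2 : ℂ) / Complex.sinh (z ^ (1 / 2 : ℂ))).re := by
  have hw_sq : (z ^ (1 / 2 : ℂ)) ^ 2 = z := by
    rw [show (1 / 2 : ℂ) = ((2 : ℕ) : ℂ)⁻¹ by norm_num]
    exact Complex.cpow_nat_inv_pow z two_ne_zero
  set w := z ^ (1 / 2 : ℂ)
  have hw0 : w ≠ 0 := fun h ↦ hz0 (by rw [← hw_sq, h, zero_pow two_ne_zero])
  have hw : ‖w‖ ≤ 1 := by
    refine (pow_le_one_iff_of_nonneg (norm_nonneg w) two_ne_zero).mp ?_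
    rw [← norm_pow, hw_sq]; exact hz.le
  calc (4 / 7 : ℝ) ≤ 9 / 11 := by norm_num
    _ ≤ _ := Complex.nine_div_eleven_le_re_div_sinh hw0 hw
end

section
/- For every z in the open unit disk 𝔻 with z ≠ 0, Re( (cosh(√z) − 1) / z ) ≥ 5/18, where √z denotes the principal square root of z. -/
/-! Writing `w = √z`, the quotient is `(cosh w - 1) / w ^ 2 = 1/2 + w^2/24 + …`. The Taylor remainder
of `exp` after the cubic term is at most `5/96 ‖w‖⁴` on the closed unit disk, so the same holds for
`cosh w - 1 - w²/2`; dividing by `w² = z` gives `Re ≥ 1/2 - 5/96 > 5/18`. -/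

namespace Complex

lemma norm_exp_sub_taylor_three_le {w : ℂ} (hw : ‖w‖ ≤ 1) :
    ‖exp w - (1 + w + w ^ 2 / 2 + w ^ 3 / 6)‖ ≤ 5 / 96 * ‖w‖ ^ 4 := by
  have h := exp_bound hw (n := 4) (by norm_num)
  simp only [Finset.sum_range_succ, Finset.sum_range_zero, Nat.factorial] at h
  norm_num at h
  linarith

lemma norm_cosh_sub_one_sub_sq_div_two_le {w : ℂ} (hw : ‖w‖ ≤ 1) :
    ‖cosh w - 1 - w ^ 2 / 2‖ ≤ 5 / 96 * ‖w‖ ^ 4 := by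
  have hpos := norm_exp_sub_taylor_three_le hw
  have hneg := norm_exp_sub_taylor_three_le (w := -w) (by rwa [norm_neg])
  rw [norm_neg] at hneg
  have hsplit : cosh w - 1 - w ^ 2 / 2 = (exp w - (1 + w + w ^ 2 / 2 + w ^ 3 / 6)
      + (exp (-w) - (1 + -w + (-w) ^ 2 / 2 + (-w) ^ 3 / 6))) / 2 := by
    rw [cosh]; ring
  rw [hsplit, norm_div, Complex.norm_two]
  linarith [norm_add_le (exp w - (1 + w + w ^ 2 / 2 + w ^ 3 / 6))
    (exp (-w) - (1 + -w + (-w) ^ 2 / 2 + (-w) ^ 3 / 6))]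

lemma norm_cosh_sub_one_div_sq_sub_half_le {w : ℂ} (hw : ‖w‖ ≤ 1) (hw0 : w ≠ 0) :
    ‖(cosh w - 1) / w ^ 2 - 1 / 2‖ ≤ 5 / 96 * ‖w‖ ^ 2 := by
  have hsq : w ^ 2 ≠ 0 := pow_ne_zero 2 hw0
  have hdiv : (cosh w - 1) / w ^ 2 - 1 / 2 = (cosh w - 1 - w ^ 2 / 2) / w ^ 2 := by
    field_simp
  rw [hdiv, norm_div, norm_pow, div_le_iff₀ (by positivity)]
  linarith [norm_cosh_sub_one_sub_sq_div_two_le hw]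

end Complex

theorem re_cosh_sqrt_sub_one_div_ge (z : ℂ) (hz : ‖z‖ < 1) (hz0 : z ≠ 0) :
    (5 / 18 : ℝ) ≤ ((Complex.cosh (z ^ (1 / 2 : ℂ)) - 1) / z).re := by
  set w := z ^ (1 / 2 : ℂ)
  have hwz : w ^ 2 = z := by simp [w]
  have hnorm : ‖w‖ ^ 2 = ‖z‖ := by rw [← hwz, norm_pow]
  have hw : ‖w‖ ≤ 1 := by nlinarith [norm_nonneg w]
  have hw0 : w ≠ 0 := fun h => hz0 (by rw [← hwz, h, zero_pow two_ne_zero])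
  have hclose := Complex.norm_cosh_sub_one_div_sq_sub_half_le hw hw0
  rw [hwz, hnorm] at hclose
  have hre := Complex.abs_re_le_norm ((Complex.cosh w - 1) / z - 1 / 2)
  rw [Complex.sub_re] at hre
  norm_num at hre
  linarith [abs_le.mp hre]
end

section
/- For every z in the open unit disk 𝔻 with z ≠ 0, Re( (sinh(√z) − √z) / (z√z) ) ≥ 11/96, where √z denotes the principal square root of z. -/
/-!
With `w = √z` we have `z √z = w³` and `‖w‖ < 1`, so the quantity is `Re((sinh w - w) / w³)`.
Since `(sinh w - w) / w³ = 1/6 + w²/120 + ⋯`, it suffices to bound the tail: by the degree-5 Taylor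
estimate for `exp` at `±w`, `‖sinh w - w - w³/6‖ ≤ ‖w‖⁵/100`, hence the real part is at least
`1/6 - 1/100 > 11/96`.
-/

open Complex Finset

theorem Complex.norm_sinh_sub_sub_cube_div_six_le {w : ℂ} (hw : ‖w‖ ≤ 1) :
    ‖sinh w - w - w ^ 3 / 6‖ ≤ ‖w‖ ^ 5 / 100 := by
  have hconst : ((Nat.succ 5 : ℝ)) * ((Nat.factorial 5 : ℝ) * (5 : ℕ))⁻¹ = 1 / 100 := by
    norm_num [Nat.factorial]
  have hpos := exp_bound hw (n := 5) (by norm_num)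
  have hneg := exp_bound (x := -w) (by rwa [norm_neg]) (n := 5) (by norm_num)
  rw [hconst] at hpos hneg
  rw [norm_neg] at hneg
  have hsplit : sinh w - w - w ^ 3 / 6 =
      ((exp w - ∑ m ∈ range 5, w ^ m / m.factorial) -
        (exp (-w) - ∑ m ∈ range 5, (-w) ^ m / m.factorial)) / 2 := by
    simp [sinh, sum_range_succ, Nat.factorial]
    ring
  rw [hsplit, norm_div, Complex.norm_two]
  linarith [norm_sub_le (exp w - ∑ m ∈ range 5, w ^ m / m.factorial)
    (exp (-w) - ∑ m ∈ range 5, (-w) ^ m / m.factorial)]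

theorem Complex.re_sinh_sub_div_cube_ge {w : ℂ} (hw0 : w ≠ 0) (hw : ‖w‖ ≤ 1) :
    1 / 6 - 1 / 100 ≤ ((sinh w - w) / w ^ 3).re := by
  set r := (sinh w - w - w ^ 3 / 6) / w ^ 3
  have hsplit : (sinh w - w) / w ^ 3 = 1 / 6 + r := by
    simp only [r]
    field_simp
    ring
  have hr : ‖r‖ ≤ 1 / 100 := by
    have hw3 : 0 < ‖w‖ ^ 3 := by positivity
    simp only [r, norm_div, norm_pow]
    rw [div_le_iff₀ hw3]
    calc ‖sinh w - w - w ^ 3 / 6‖ ≤ ‖w‖ ^ 5 / 100 := norm_sinh_sub_sub_cube_div_six_le hw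
      _ = 1 / 100 * (‖w‖ ^ 2 * ‖w‖ ^ 3) := by ring
      _ ≤ 1 / 100 * (1 * ‖w‖ ^ 3) := by gcongr; exact pow_le_one₀ (norm_nonneg w) hw
      _ = 1 / 100 * ‖w‖ ^ 3 := by ring
  have hre : (1 / 6 + r).re = 1 / 6 + r.re := by simp
  rw [hsplit, hre]
  linarith [(abs_le.mp ((abs_re_le_norm r).trans hr)).1]

theorem re_sinh_sqrt_sub_sqrt_div_ge (z : ℂ) (hz : ‖z‖ < 1) (hz0 : z ≠ 0) :
    (11 / 96 : ℝ) ≤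
      ((Complex.sinh (z ^ (1 / 2 : ℂ)) - z ^ (1 / 2 : ℂ)) / (z * z ^ (1 / 2 : ℂ))).re := by
  set w : ℂ := z ^ (1 / 2 : ℂ)
  have hw2 : w ^ 2 = z := by
    show (z ^ (1 / 2 : ℂ)) ^ 2 = z
    rw [show (1 / 2 : ℂ) = ((2 : ℕ) : ℂ)⁻¹ by norm_num]
    exact cpow_nat_inv_pow z two_ne_zero
  have hw0 : w ≠ 0 := by
    rintro hw
    exact hz0 (by rw [← hw2, hw, zero_pow two_ne_zero])
  have hw1 : ‖w‖ ≤ 1 := by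
    have : ‖w‖ ^ 2 < 1 := by rwa [← norm_pow, hw2]
    exact ((sq_lt_one_iff₀ (norm_nonneg w)).mp this).le
  have hzw : z * w = w ^ 3 := by rw [← hw2]; ring
  rw [hzw]
  linarith [re_sinh_sub_div_cube_ge hw0 hw1]
end

section
/- For every z in the open unit disk 𝔻 with z ≠ 0, Re( z√z / (sinh(√z) − √z) ) ≥ 32/7, where √z denotes the principal square root of z. -/
/-!
With `w = √z` the quotient is `1 / f(w)` for `f(w) = (sinh w - w) / w³ = 1/6 + O(w²)`.
The Taylor bound for `exp` at order 5 gives `‖f(w) - 1/6‖ ≤ 1/100` on the unit disk, and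
inversion maps the disk `‖f - c‖ ≤ r` (with `r < c`) into the half-plane `Re ≥ 1/(c + r)`.
-/

open Complex Finset

theorem Complex.norm_sinh_sub_sub_le {x : ℂ} (hx : ‖x‖ ≤ 1) :
    ‖sinh x - x - x ^ 3 / 6‖ ≤ ‖x‖ ^ 5 / 100 := by
  have hbound : ∀ y : ℂ, ‖y‖ ≤ 1 →
      ‖exp y - ∑ m ∈ range 5, y ^ m / (m.factorial : ℂ)‖ ≤ ‖y‖ ^ 5 / 100 := fun y hy => by
    have := exp_bound hy (n := 5) (by norm_num)
    norm_num [Nat.factorial] at this ⊢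
    linarith
  have hsplit : sinh x - x - x ^ 3 / 6 =
      ((exp x - ∑ m ∈ range 5, x ^ m / (m.factorial : ℂ)) -
        (exp (-x) - ∑ m ∈ range 5, (-x) ^ m / (m.factorial : ℂ))) / 2 := by
    simp only [sinh, sum_range_succ, sum_range_zero, Nat.factorial]
    push_cast
    ring
  rw [hsplit, norm_div, Complex.norm_two]
  have := norm_sub_le_of_le (hbound x hx) (hbound (-x) (by rwa [norm_neg]))
  rw [norm_neg] at this
  linarith

theorem Complex.norm_sinh_sub_div_pow_three_sub_le {w : ℂ} (hw : ‖w‖ ≤ 1) (hw0 : w ≠ 0) :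
    ‖(sinh w - w) / w ^ 3 - 1 / 6‖ ≤ ‖w‖ ^ 2 / 100 := by
  have hw3 : 0 < ‖w‖ ^ 3 := pow_pos (norm_pos_iff.mpr hw0) 3
  have : (sinh w - w) / w ^ 3 - 1 / 6 = (sinh w - w - w ^ 3 / 6) / w ^ 3 := by
    field_simp
  rw [this, norm_div, norm_pow, div_le_iff₀ hw3]
  calc _ ≤ ‖w‖ ^ 5 / 100 := norm_sinh_sub_sub_le hw
    _ = _ := by ring

theorem Complex.one_div_add_le_re_inv {f : ℂ} {c r : ℝ} (hrc : r < c) (h : ‖f - c‖ ≤ r) :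
    1 / (c + r) ≤ (f⁻¹).re := by
  have hr : 0 ≤ r := (norm_nonneg _).trans h
  have hsq : normSq (f - c) ≤ r ^ 2 := by
    rw [normSq_eq_norm_sq]; exact pow_le_pow_left₀ (norm_nonneg _) h 2
  have hre : |f.re - c| ≤ r := by
    simpa using (abs_re_le_norm (f - c)).trans h
  have hre_upper : f.re ≤ c + r := by linarith [(abs_le.mp hre).2]
  have hre_lower : c - r ≤ f.re := by linarith [(abs_le.mp hre).1]
  have hnormSq : normSq f = normSq (f - c) + 2 * c * f.re - c ^ 2 := by
    simp only [normSq_apply, sub_re, sub_im, ofReal_re, ofReal_im]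
    ring
  have hpos : 0 < normSq f := by nlinarith [re_sq_le_normSq f]
  rw [inv_re, div_le_div_iff₀ (by linarith) hpos]
  -- `normSq f ≤ r² - c² + 2c Re f ≤ (c + r) Re f`, the last step being `(c - r) Re f ≤ c² - r²`.
  nlinarith

theorem re_div_sinh_sqrt_sub_sqrt_ge (z : ℂ) (hz : ‖z‖ < 1) (hz0 : z ≠ 0) :
    (32 / 7 : ℝ) ≤
      (z * z ^ (1 / 2 : ℂ) / (Complex.sinh (z ^ (1 / 2 : ℂ)) - z ^ (1 / 2 : ℂ))).re := by
  set w := z ^ (1 / 2 : ℂ)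
  have hwz : w ^ 2 = z := by simp [w, one_div]
  have hw0 : w ≠ 0 := fun hw => hz0 (by rw [← hwz, hw, zero_pow two_ne_zero])
  have hw : ‖w‖ ≤ 1 := by
    have : ‖w‖ ^ 2 < 1 := by rwa [← norm_pow, hwz]
    nlinarith [norm_nonneg w]
  have hquot : z * w / (sinh w - w) = ((sinh w - w) / w ^ 3)⁻¹ := by
    rw [inv_div, ← hwz]; ring
  have hdisk : ‖(sinh w - w) / w ^ 3 - ((1 / 6 : ℝ) : ℂ)‖ ≤ 1 / 100 := by
    push_cast
    refine (norm_sinh_sub_div_pow_three_sub_le hw hw0).trans ?_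
    gcongr
    exact pow_le_one₀ (norm_nonneg w) hw
  rw [hquot]
  refine le_trans ?_ (one_div_add_le_re_inv (by norm_num) hdisk)
  norm_num
end

section
/- For every z in the open unit disk 𝔻 with z ≠ 0, Re( (√z cosh(√z) − sinh(√z)) / (z√z) ) ≥ 1/24, where √z denotes the principal square root of z. -/
/-!
With `w = √z` the quantity is `f(w) = (w cosh w - sinh w) / w³`, and
`2 (w cosh w - sinh w) = (w - 1) eʷ + (w + 1) e⁻ʷ`. Replacing `e^{±w}` by its cubic Taylor
polynomial leaves exactly `2w³/3`, so the Taylor remainder bound `|R₄(x)| ≤ 5/96 |x|⁴` for `|x| ≤ 1`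
gives `|f(w) - 1/3| ≤ 5/48 |w|`, hence `Re f(w) ≥ 1/3 - 5/48 = 11/48 > 1/24` on the unit disk.
-/

open Complex Finset

namespace Complex

theorem norm_exp_sub_cubic_le {x : ℂ} (hx : ‖x‖ ≤ 1) :
    ‖exp x - (1 + x + x ^ 2 / 2 + x ^ 3 / 6)‖ ≤ 5 / 96 * ‖x‖ ^ 4 := by
  have h := exp_bound hx (n := 4) (by norm_num)
  norm_num [sum_range_succ, Nat.factorial] at h
  linarith

theorem mul_cosh_sub_sinh_sub_cube_div_three (w : ℂ) :
    w * cosh w - sinh w - w ^ 3 / 3 =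
      ((w - 1) * (exp w - (1 + w + w ^ 2 / 2 + w ^ 3 / 6)) +
        (w + 1) * (exp (-w) - (1 + -w + (-w) ^ 2 / 2 + (-w) ^ 3 / 6))) / 2 := by
  rw [cosh, sinh]
  ring

theorem norm_mul_cosh_sub_sinh_sub_cube_div_three_le {w : ℂ} (hw : ‖w‖ ≤ 1) :
    ‖w * cosh w - sinh w - w ^ 3 / 3‖ ≤ 5 / 48 * ‖w‖ ^ 4 := by
  have hneg : ‖-w‖ ≤ 1 := by rwa [norm_neg]
  have hsub : ‖w - 1‖ ≤ 2 := (norm_sub_le _ _).trans (by rw [norm_one]; linarith)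
  have hadd : ‖w + 1‖ ≤ 2 := (norm_add_le _ _).trans (by rw [norm_one]; linarith)
  have hR₁ := norm_exp_sub_cubic_le hw
  have hR₂ := norm_exp_sub_cubic_le hneg
  rw [norm_neg] at hR₂
  rw [mul_cosh_sub_sinh_sub_cube_div_three, norm_div, RCLike.norm_ofNat]
  calc _ ≤ (‖w - 1‖ * (5 / 96 * ‖w‖ ^ 4) + ‖w + 1‖ * (5 / 96 * ‖w‖ ^ 4)) / 2 := by
        gcongr
        refine (norm_add_le _ _).trans ?_
        rw [norm_mul, norm_mul]
        gcongr
    _ ≤ (2 * (5 / 96 * ‖w‖ ^ 4) + 2 * (5 / 96 * ‖w‖ ^ 4)) / 2 := by gcongr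
    _ = 5 / 48 * ‖w‖ ^ 4 := by ring

theorem norm_mul_cosh_sub_sinh_div_cube_sub_third_le {w : ℂ} (hw : ‖w‖ ≤ 1) (hw0 : w ≠ 0) :
    ‖(w * cosh w - sinh w) / w ^ 3 - 1 / 3‖ ≤ 5 / 48 * ‖w‖ := by
  have hw3 : (0 : ℝ) < ‖w‖ ^ 3 := by positivity
  have key : (w * cosh w - sinh w) / w ^ 3 - 1 / 3 = (w * cosh w - sinh w - w ^ 3 / 3) / w ^ 3 := by
    field_simp
  rw [key, norm_div, norm_pow, div_le_iff₀ hw3]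
  calc _ ≤ 5 / 48 * ‖w‖ ^ 4 := norm_mul_cosh_sub_sinh_sub_cube_div_three_le hw
    _ = 5 / 48 * ‖w‖ * ‖w‖ ^ 3 := by ring

theorem sub_norm_sub_ofReal_le_re (f : ℂ) (c : ℝ) : c - ‖f - c‖ ≤ f.re := by
  have h := (abs_le.mp (abs_re_le_norm (f - c))).1
  rw [sub_re, ofReal_re] at h
  linarith

theorem cpow_one_half_sq (z : ℂ) : (z ^ (1 / 2 : ℂ)) ^ 2 = z := by
  rw [one_div, cpow_ofNat_inv_pow]

end Complex

theorem re_sqrt_cosh_sub_sinh_div_ge (z : ℂ) (hz : ‖z‖ < 1) (hz0 : z ≠ 0) :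
    (1 / 24 : ℝ) ≤
      ((z ^ (1 / 2 : ℂ) * Complex.cosh (z ^ (1 / 2 : ℂ)) - Complex.sinh (z ^ (1 / 2 : ℂ))) /
        (z * z ^ (1 / 2 : ℂ))).re := by
  set w := z ^ (1 / 2 : ℂ)
  have hsq : w ^ 2 = z := cpow_one_half_sq z
  have hw0 : w ≠ 0 := by rintro h; simp [← hsq, h] at hz0
  have hw : ‖w‖ ≤ 1 := by
    have : ‖w‖ ^ 2 < 1 := by rwa [← norm_pow, hsq]
    exact (pow_lt_one_iff_of_nonneg (norm_nonneg w) two_ne_zero).mp this |>.le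
  rw [← hsq, ← pow_succ]
  have hre := sub_norm_sub_ofReal_le_re ((w * cosh w - sinh w) / w ^ 3) (1 / 3)
  have hnorm := norm_mul_cosh_sub_sinh_div_cube_sub_third_le hw hw0
  push_cast at hre
  linarith
end

section
/- Let α ≥ 1 and β ≥ (1+√5)/2 be real numbers, let A_n = Γ(β)/Γ(αn+β) for n ≥ 1, and let m be a nonnegative integer. Then Σ_{n=1}^m A_n + (β²/(β+1)) Σ_{n=m+1}^∞ A_n ≤ 1. -/
/-!
Since `β² / (β + 1) ≥ 1` for `β ≥ φ`, the left-hand side is at most `β² / (β + 1)` times the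
whole series `∑_{n ≥ 1} A_n`. By monotonicity of `Γ` on `[2, ∞)` and `Γ(x + 1) = x Γ(x)`, the
term `A_{k+1}` is at most `β⁻¹ (β + 1)⁻ᵏ`, so the whole series is at most `(β + 1) / β²`.
-/

open Finset Real

lemma sum_Icc_add_mul_tsum_le_mul_tsum {f : ℕ → ℝ} (hf₀ : ∀ n, 0 ≤ f n)
    (hf : Summable fun k => f (k + 1)) {c : ℝ} (hc : 1 ≤ c) (m : ℕ) :
    ∑ n ∈ Icc 1 m, f n + c * ∑' k, f (m + 1 + k) ≤ c * ∑' k, f (k + 1) := by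
  have hsplit : ∑ n ∈ Icc 1 m, f n + ∑' k, f (m + 1 + k) = ∑' k, f (k + 1) := by
    rw [← hf.sum_add_tsum_nat_add m, range_eq_Ico, sum_Ico_add' f 0 m 1, zero_add,
      Ico_add_one_right_eq_Icc]
    exact congrArg _ (tsum_congr fun k => congrArg f (by ring))
  have hpartial : 0 ≤ ∑ n ∈ Icc 1 m, f n := sum_nonneg fun n _ => hf₀ n
  rw [← hsplit]
  nlinarith

namespace Real

lemma add_one_le_sq_of_goldenRatio_le {β : ℝ} (hβ : goldenRatio ≤ β) : β + 1 ≤ β ^ 2 := by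
  nlinarith [goldenRatio_sq, one_lt_goldenRatio]

lemma Gamma_mul_pow_le_Gamma_add_nat {x : ℝ} (hx : 0 < x) (k : ℕ) :
    Gamma x * x ^ k ≤ Gamma (x + k) := by
  induction k with
  | zero => simp
  | succ k ih =>
    have hxk : 0 < x + k := by positivity
    calc Gamma x * x ^ (k + 1) = x * (Gamma x * x ^ k) := by ring
      _ ≤ (x + k) * Gamma (x + k) := by gcongr; linarith [k.cast_nonneg (α := ℝ)]
      _ = Gamma (x + (k + 1 : ℕ)) := by rw [Nat.cast_succ, ← add_assoc, Gamma_add_one hxk.ne']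

variable {α β : ℝ}

lemma Gamma_div_Gamma_mul_succ_add_le (hα : 1 ≤ α) (hβ : 1 ≤ β) (k : ℕ) :
    Gamma β / Gamma (α * (k + 1 : ℕ) + β) ≤ β⁻¹ * (β + 1)⁻¹ ^ k := by
  have hβ₀ : 0 < β := by linarith
  have hk : (0 : ℝ) ≤ k := k.cast_nonneg
  have hmono : Gamma (β + 1 + k) ≤ Gamma (α * (k + 1 : ℕ) + β) :=
    Gamma_strictMonoOn_Ici.monotoneOn (Set.mem_Ici.2 (by linarith))
      (Set.mem_Ici.2 (by push_cast; nlinarith)) (by push_cast; nlinarith)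
  have hgeom := Gamma_mul_pow_le_Gamma_add_nat (by linarith : 0 < β + 1) k
  rw [Gamma_add_one hβ₀.ne'] at hgeom
  rw [div_le_iff₀ (Gamma_pos_of_pos (by positivity))]
  calc Gamma β = β⁻¹ * (β + 1)⁻¹ ^ k * (β * Gamma β * (β + 1) ^ k) := by
        rw [inv_pow]; field_simp
    _ ≤ β⁻¹ * (β + 1)⁻¹ ^ k * Gamma (α * (k + 1 : ℕ) + β) := by
      gcongr
      exact hgeom.trans hmono

lemma hasSum_inv_mul_geometric (hβ : 0 < β) :
    HasSum (fun k : ℕ => β⁻¹ * (β + 1)⁻¹ ^ k) ((β + 1) / β ^ 2) := by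
  have hsum := (hasSum_geometric_of_lt_one (r := (β + 1)⁻¹) (by positivity)
    (inv_lt_one_of_one_lt₀ (by linarith))).mul_left β⁻¹
  rwa [show β⁻¹ * (1 - (β + 1)⁻¹)⁻¹ = (β + 1) / β ^ 2 by
    rw [inv_eq_one_div (β + 1), one_sub_div (by positivity), add_sub_cancel_right, inv_div]
    field_simp] at hsum

lemma summable_Gamma_div_Gamma_mul_succ_add (hα : 1 ≤ α) (hβ : 1 ≤ β) :
    Summable fun k : ℕ => Gamma β / Gamma (α * (k + 1 : ℕ) + β) :=
  .of_nonneg_of_le (fun _ => by positivity) (Gamma_div_Gamma_mul_succ_add_le hα hβ)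
    (hasSum_inv_mul_geometric (by linarith)).summable

lemma tsum_Gamma_div_Gamma_mul_succ_add_le (hα : 1 ≤ α) (hβ : 1 ≤ β) :
    ∑' k : ℕ, Gamma β / Gamma (α * (k + 1 : ℕ) + β) ≤ (β + 1) / β ^ 2 :=
  hasSum_le (Gamma_div_Gamma_mul_succ_add_le hα hβ)
    (summable_Gamma_div_Gamma_mul_succ_add hα hβ).hasSum (hasSum_inv_mul_geometric (by linarith))

end Real

theorem partial_sum_plus_tail_le_one (α β : ℝ) (hα : 1 ≤ α)
    (hβ : (1 + Real.sqrt 5) / 2 ≤ β) (m : ℕ) :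
    (∑ n ∈ Finset.Icc 1 m, Real.Gamma β / Real.Gamma (α * n + β)) +
      β ^ 2 / (β + 1) *
        ∑' k : ℕ, Real.Gamma β / Real.Gamma (α * (m + 1 + k) + β) ≤ 1 := by
  have hβ₁ : 1 ≤ β := one_lt_goldenRatio.le.trans hβ
  have hc : 1 ≤ β ^ 2 / (β + 1) := by
    rw [one_le_div (by positivity)]
    exact add_one_le_sq_of_goldenRatio_le hβ
  have hle := sum_Icc_add_mul_tsum_le_mul_tsum (f := fun n => Gamma β / Gamma (α * n + β))
    (fun n => by positivity) (summable_Gamma_div_Gamma_mul_succ_add hα hβ₁) hc m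
  calc _ ≤ β ^ 2 / (β + 1) * ∑' k : ℕ, Gamma β / Gamma (α * (k + 1 : ℕ) + β) := by
        simpa using hle
    _ ≤ β ^ 2 / (β + 1) * ((β + 1) / β ^ 2) := by
        gcongr
        exact tsum_Gamma_div_Gamma_mul_succ_add_le hα hβ₁
    _ = 1 := by field_simp
end
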